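/- arXiv:1607.00533 — 5 statements merged into one kernel-verified Lean document; each statement's English description precedes it below -/
import Mathlib

section
/- Let M ≥ 2, let p1, p2 ∈ ℝ^M be probability vectors, let ε1, ε2 ≥ 0, and let w0 ∈ ℝ^M be a strictly positive probability vector. Suppose α* ∈ ℝ^M is an optimal solution of the quadratic vector problem, and let v ∈ ℝ^M be any unit vector with Σ_{j=1}^M v_j·√(w0_j) = 0. Then the rank-one matrix A* with entries A*_{ij} = α*_i · v_j is feasible for the matrix problem and is an optimal solution of the matrix problem, i.e., F(A*) equals the supremum of F over the feasible set of the matrix problem. -/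
open Real

noncomputable section

/-- Objective of the quadratic vector problem:
`Q(α) = (1/2)·(Σ_i (p1_i − p2_i) α_i)²`. -/
def Qobj {M : ℕ} (p1 p2 : Fin M → ℝ) (α : Fin M → ℝ) : ℝ :=
  (1 / 2) * (∑ i, (p1 i - p2 i) * α i) ^ 2

/-- Feasible set of the quadratic vector problem:
`(1/2)·Σ_i p1_i α_i² ≤ ε1` and `(1/2)·Σ_i p2_i α_i² ≤ ε2`. -/
def QFeas {M : ℕ} (p1 p2 : Fin M → ℝ) (ε1 ε2 : ℝ) : Set (Fin M → ℝ) :=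
  {α | (1 / 2) * ∑ i, p1 i * (α i) ^ 2 ≤ ε1 ∧ (1 / 2) * ∑ i, p2 i * (α i) ^ 2 ≤ ε2}

/-- Objective of the matrix problem:
`F(A) = (1/2)·‖Σ_i (p1_i − p2_i) A_i‖²` (squared Euclidean norm of the
indicated combination of the rows of `A`). -/
def Fobj {M : ℕ} (p1 p2 : Fin M → ℝ) (A : Matrix (Fin M) (Fin M) ℝ) : ℝ :=
  (1 / 2) * ∑ j, (∑ i, (p1 i - p2 i) * A i j) ^ 2

/-- Feasible set of the matrix problem:
`(1/2)·Σ_i p1_i ‖A_i‖² ≤ ε1`, `(1/2)·Σ_i p2_i ‖A_i‖² ≤ ε2`, and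
`Σ_j A_{ij} √(w0_j) = 0` for every `i`. -/
def MFeas {M : ℕ} (p1 p2 : Fin M → ℝ) (ε1 ε2 : ℝ) (w0 : Fin M → ℝ) :
    Set (Matrix (Fin M) (Fin M) ℝ) :=
  {A | (1 / 2) * ∑ i, p1 i * ∑ j, (A i j) ^ 2 ≤ ε1 ∧
       (1 / 2) * ∑ i, p2 i * ∑ j, (A i j) ^ 2 ≤ ε2 ∧
       ∀ i, ∑ j, A i j * Real.sqrt (w0 j) = 0}

/-!
Rank-one matrices `α vᵀ` with `v` a unit vector orthogonal to `√w0` turn the matrix problem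
into the vector problem verbatim: constraints and objective of `α vᵀ` are those of `α`.
Conversely, for a feasible `A` put `s = Σ_i (p1_i − p2_i) A_i` and `α_i = ⟨A_i, s⟩ / ‖s‖`.
By Cauchy–Schwarz `α_i² ≤ ‖A_i‖²`, so `α` is feasible for the vector problem, while
`Σ_i (p1_i − p2_i) α_i = ‖s‖`, so `Q(α) = F(A)`. Hence no feasible matrix beats `Q(α*)`.
-/

section RowCoefficients

variable {ι κ : Type*} [Fintype ι] [Fintype κ]

theorem sq_div_sqrt_sum_sq_le (a s : κ → ℝ) :
    ((∑ j, a j * s j) / √(∑ j, s j ^ 2)) ^ 2 ≤ ∑ j, a j ^ 2 := by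
  have hS : 0 ≤ ∑ j, s j ^ 2 := by positivity
  rw [div_pow, sq_sqrt hS]
  exact div_le_of_le_mul₀ hS (by positivity) (Finset.univ.sum_mul_sq_le_sq_mul_sq a s)

/-- Witness: `α_i = ⟨A_i, s⟩ / ‖s‖` with `s = Σ_i c_i A_i`; at `s = 0` the junk value
`x / 0 = 0` gives `α = 0`, which still works. -/
theorem exists_rowCoeffs_sq_le_of_combination (c : ι → ℝ) (A : ι → κ → ℝ) :
    ∃ α : ι → ℝ, (∀ i, α i ^ 2 ≤ ∑ j, A i j ^ 2) ∧
      (∑ i, c i * α i) ^ 2 = ∑ j, (∑ i, c i * A i j) ^ 2 := by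
  set s : κ → ℝ := fun j => ∑ i, c i * A i j
  refine ⟨fun i => (∑ j, A i j * s j) / √(∑ j, s j ^ 2),
    fun i => sq_div_sqrt_sum_sq_le (A i) s, ?_⟩
  have hcomb : ∑ i, c i * ((∑ j, A i j * s j) / √(∑ j, s j ^ 2))
      = (∑ j, s j ^ 2) / √(∑ j, s j ^ 2) := by
    simp only [mul_div_assoc', ← Finset.sum_div, Finset.mul_sum]
    rw [Finset.sum_comm]
    congr 1
    refine Finset.sum_congr rfl fun j _ => ?_
    simp only [s, sq, Finset.sum_mul]
    exact Finset.sum_congr rfl fun i _ => by ring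
  rw [hcomb, div_sqrt, sq_sqrt (by positivity)]

end RowCoefficients

section RankOne

variable {M : ℕ} (p1 p2 : Fin M → ℝ) {α v : Fin M → ℝ}

theorem sum_sq_mul_eq_of_sum_sq_eq_one (a : ℝ) (hv : ∑ j, v j ^ 2 = 1) :
    ∑ j, (a * v j) ^ 2 = a ^ 2 := by
  simp only [mul_pow, ← Finset.mul_sum, hv, mul_one]

theorem rankOne_mem_MFeas {ε1 ε2 : ℝ} {w0 : Fin M → ℝ} (hα : α ∈ QFeas p1 p2 ε1 ε2)
    (hv_unit : ∑ j, v j ^ 2 = 1) (hv_orth : ∑ j, v j * √(w0 j) = 0) :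
    (fun i j => α i * v j : Matrix (Fin M) (Fin M) ℝ) ∈ MFeas p1 p2 ε1 ε2 w0 := by
  refine ⟨?_, ?_, fun i => ?_⟩
  · simpa only [sum_sq_mul_eq_of_sum_sq_eq_one _ hv_unit] using hα.1
  · simpa only [sum_sq_mul_eq_of_sum_sq_eq_one _ hv_unit] using hα.2
  · simp only [mul_assoc, ← Finset.mul_sum, hv_orth, mul_zero]

theorem Fobj_rankOne :
    Fobj p1 p2 (fun i j => α i * v j) = Qobj p1 p2 α * ∑ j, v j ^ 2 := by
  simp only [Fobj, Qobj, ← mul_assoc, ← Finset.sum_mul, mul_pow, ← Finset.mul_sum]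

end RankOne

theorem exists_mem_QFeas_Qobj_eq_Fobj {M : ℕ} {p1 p2 : Fin M → ℝ} (hp1 : ∀ i, 0 ≤ p1 i)
    (hp2 : ∀ i, 0 ≤ p2 i) {ε1 ε2 : ℝ} {w0 : Fin M → ℝ} {A : Matrix (Fin M) (Fin M) ℝ}
    (hA : A ∈ MFeas p1 p2 ε1 ε2 w0) :
    ∃ α ∈ QFeas p1 p2 ε1 ε2, Qobj p1 p2 α = Fobj p1 p2 A := by
  obtain ⟨α, hα_le, hα_eq⟩ := exists_rowCoeffs_sq_le_of_combination (fun i => p1 i - p2 i) A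
  refine ⟨α, ⟨le_trans ?_ hA.1, le_trans ?_ hA.2.1⟩, by rw [Qobj, Fobj, hα_eq]⟩
  · gcongr with i; exacts [hp1 i, hα_le i]
  · gcongr with i; exacts [hp2 i, hα_le i]

theorem rankOne_optimal_matrix_general {M : ℕ}
    (p1 p2 : Fin M → ℝ)
    (hp1 : ∀ i, 0 ≤ p1 i)
    (hp2 : ∀ i, 0 ≤ p2 i)
    (ε1 ε2 : ℝ)
    (w0 : Fin M → ℝ)
    (αs : Fin M → ℝ) (hαs_feas : αs ∈ QFeas p1 p2 ε1 ε2)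
    (hαs_opt : ∀ β ∈ QFeas p1 p2 ε1 ε2, Qobj p1 p2 β ≤ Qobj p1 p2 αs)
    (v : Fin M → ℝ) (hv_unit : ∑ j, (v j) ^ 2 = 1)
    (hv_orth : ∑ j, v j * Real.sqrt (w0 j) = 0) :
    (fun i j => αs i * v j : Matrix (Fin M) (Fin M) ℝ) ∈ MFeas p1 p2 ε1 ε2 w0 ∧
      Fobj p1 p2 (fun i j => αs i * v j) =
        sSup (Fobj p1 p2 '' MFeas p1 p2 ε1 ε2 w0) := by
  have hfeas := rankOne_mem_MFeas p1 p2 hαs_feas hv_unit hv_orth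
  refine ⟨hfeas, Eq.symm <| IsGreatest.csSup_eq ⟨⟨_, hfeas, rfl⟩, ?_⟩⟩
  rintro _ ⟨A, hA, rfl⟩
  obtain ⟨α, hα, hQα⟩ := exists_mem_QFeas_Qobj_eq_Fobj hp1 hp2 hA
  rw [Fobj_rankOne, hv_unit, mul_one, ← hQα]
  exact hαs_opt α hα

/-- if `α*` is an optimal solution of the quadratic vector problem and
`v` is a unit vector orthogonal to `√w0`, then the rank-one matrix
`A*_{ij} = α*_i v_j` is feasible for the matrix problem and optimal for it, i.e.
`F(A*)` equals the supremum of `F` over the feasible set of the matrix problem. -/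
theorem rankOne_optimal_matrix {M : ℕ} (hM : 2 ≤ M)
    (p1 p2 : Fin M → ℝ)
    (hp1 : ∀ i, 0 ≤ p1 i) (hp1s : ∑ i, p1 i = 1)
    (hp2 : ∀ i, 0 ≤ p2 i) (hp2s : ∑ i, p2 i = 1)
    (ε1 ε2 : ℝ) (hε1 : 0 ≤ ε1) (hε2 : 0 ≤ ε2)
    (w0 : Fin M → ℝ) (hw0 : ∀ j, 0 < w0 j) (hw0s : ∑ j, w0 j = 1)
    (αs : Fin M → ℝ) (hαs_feas : αs ∈ QFeas p1 p2 ε1 ε2)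
    (hαs_opt : ∀ β ∈ QFeas p1 p2 ε1 ε2, Qobj p1 p2 β ≤ Qobj p1 p2 αs)
    (v : Fin M → ℝ) (hv_unit : ∑ j, (v j) ^ 2 = 1)
    (hv_orth : ∑ j, v j * Real.sqrt (w0 j) = 0) :
    (fun i j => αs i * v j : Matrix (Fin M) (Fin M) ℝ) ∈ MFeas p1 p2 ε1 ε2 w0 ∧
      Fobj p1 p2 (fun i j => αs i * v j) =
        sSup (Fobj p1 p2 '' MFeas p1 p2 ε1 ε2 w0) :=
  rankOne_optimal_matrix_general p1 p2 hp1 hp2 ε1 ε2 w0 αs hαs_feas hαs_opt v hv_unit hv_orth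
end
end

section
/- Let p1, p2 ∈ ℝ^M be probability vectors and write Δ_i = p1_i − p2_i. For every real M×M matrix A with rows A_1,…,A_M and every unit vector e ∈ ℝ^M, one has (1/2)·‖Σ_{i=1}^M Δ_i A_i‖² ≤ (1/2)·(Σ_{i=1}^M |Δ_i|·‖A_i‖)², and the rank-at-most-one matrix A' whose i-th row is A'_i = sign(Δ_i)·‖A_i‖·e satisfies ‖A'_i‖ = ‖A_i‖ for every i and (1/2)·‖Σ_{i=1}^M Δ_i A'_i‖² = (1/2)·(Σ_{i=1}^M |Δ_i|·‖A_i‖)². Consequently, for any constraints of the form (1/2)·Σ_i p1_i‖A_i‖² ≤ ε1 and (1/2)·Σ_i p2_i‖A_i‖² ≤ ε2, every feasible A is dominated in objective value by a feasible matrix of rank at most one. -/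
/-!
By the triangle inequality, `‖∑ Δ_i A_i‖ ≤ ∑ |Δ_i| ‖A_i‖`, with equality when all the rows
`Δ_i A_i` point in the same direction. The rows `sign(Δ_i) ‖A_i‖ e` achieve this while keeping
every row norm, so `A'` has rank at most one, satisfies the same row-weighted constraints as `A`,
and attains the upper bound of the objective.
-/

open Real Finset

namespace Matrix

variable {ι κ : Type*} [Fintype κ]

theorem sum_sq_sum_mul_le_sq_sum_abs_mul_sqrt [Fintype ι] (c : ι → ℝ) (A : Matrix ι κ ℝ) :
    ∑ j, (∑ i, c i * A i j) ^ 2 ≤ (∑ i, |c i| * √(∑ k, (A i k) ^ 2)) ^ 2 := by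
  let row : ι → EuclideanSpace ℝ κ := fun i => WithLp.toLp 2 (A i)
  have norm_row (i : ι) : ‖row i‖ = √(∑ k, (A i k) ^ 2) := by
    simp [row, EuclideanSpace.norm_eq]
  have norm_comb : ‖∑ i, c i • row i‖ = √(∑ j, (∑ i, c i * A i j) ^ 2) := by
    simp [row, EuclideanSpace.norm_eq, WithLp.ofLp_sum, Finset.sum_apply]
  have triangle : ‖∑ i, c i • row i‖ ≤ ∑ i, |c i| * √(∑ k, (A i k) ^ 2) :=
    (norm_sum_le _ _).trans_eq <| by simp only [norm_smul, norm_row, Real.norm_eq_abs]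
  rw [norm_comb] at triangle
  calc ∑ j, (∑ i, c i * A i j) ^ 2 = √(∑ j, (∑ i, c i * A i j) ^ 2) ^ 2 :=
        (sq_sqrt (by positivity)).symm
    _ ≤ _ := pow_le_pow_left₀ (sqrt_nonneg _) triangle 2

theorem sum_sq_vecMulVec_apply (u : ι → ℝ) (e : κ → ℝ) (i : ι) :
    ∑ j, (vecMulVec u e i j) ^ 2 = (u i) ^ 2 * ∑ j, (e j) ^ 2 := by
  simp only [vecMulVec_apply, mul_pow, mul_sum]

theorem sum_sq_sum_mul_vecMulVec [Fintype ι] (c u : ι → ℝ) (e : κ → ℝ) :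
    ∑ j, (∑ i, c i * vecMulVec u e i j) ^ 2 = (∑ i, c i * u i) ^ 2 * ∑ j, (e j) ^ 2 := by
  simp only [vecMulVec_apply, ← mul_assoc, ← sum_mul, mul_pow, mul_sum]

end Matrix

theorem mul_ite_nonneg_one_neg_one (x : ℝ) : x * (if 0 ≤ x then 1 else -1) = |x| := by
  split_ifs with hx
  · rw [mul_one, abs_of_nonneg hx]
  · rw [mul_neg_one, abs_of_neg (not_le.mp hx)]

theorem ite_nonneg_one_neg_one_sq (x : ℝ) : (if 0 ≤ x then (1 : ℝ) else -1) ^ 2 = 1 := by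
  split_ifs <;> norm_num

theorem rankOne_domination_general {M : ℕ}
    (p1 p2 : Fin M → ℝ)
    (Δ : Fin M → ℝ)
    (A : Matrix (Fin M) (Fin M) ℝ)
    (e : Fin M → ℝ) (he_unit : ∑ j, (e j) ^ 2 = 1)
    (A' : Matrix (Fin M) (Fin M) ℝ)
    (hA' : ∀ i j, A' i j =
      (if 0 ≤ Δ i then (1 : ℝ) else -1) * Real.sqrt (∑ k, (A i k) ^ 2) * e j) :
    ((1 / 2) * ∑ j, (∑ i, Δ i * A i j) ^ 2 ≤
        (1 / 2) * (∑ i, |Δ i| * Real.sqrt (∑ k, (A i k) ^ 2)) ^ 2) ∧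
    (∀ i, Real.sqrt (∑ j, (A' i j) ^ 2) = Real.sqrt (∑ j, (A i j) ^ 2)) ∧
    ((1 / 2) * ∑ j, (∑ i, Δ i * A' i j) ^ 2 =
        (1 / 2) * (∑ i, |Δ i| * Real.sqrt (∑ k, (A i k) ^ 2)) ^ 2) ∧
    (∀ ε1 ε2 : ℝ,
      (1 / 2) * ∑ i, p1 i * ∑ j, (A i j) ^ 2 ≤ ε1 →
      (1 / 2) * ∑ i, p2 i * ∑ j, (A i j) ^ 2 ≤ ε2 →
      ∃ B : Matrix (Fin M) (Fin M) ℝ, B.rank ≤ 1 ∧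
        (1 / 2) * ∑ i, p1 i * ∑ j, (B i j) ^ 2 ≤ ε1 ∧
        (1 / 2) * ∑ i, p2 i * ∑ j, (B i j) ^ 2 ≤ ε2 ∧
        (1 / 2) * ∑ j, (∑ i, Δ i * A i j) ^ 2 ≤
          (1 / 2) * ∑ j, (∑ i, Δ i * B i j) ^ 2) := by
  set s : Fin M → ℝ := fun i => if 0 ≤ Δ i then 1 else -1
  have hA'_eq : A' = Matrix.vecMulVec (fun i => s i * √(∑ k, (A i k) ^ 2)) e := by
    ext i j
    exact hA' i j
  have row_sq (i : Fin M) : ∑ j, (A' i j) ^ 2 = ∑ j, (A i j) ^ 2 := by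
    rw [hA'_eq, Matrix.sum_sq_vecMulVec_apply, he_unit, mul_one, mul_pow,
      ite_nonneg_one_neg_one_sq, one_mul, sq_sqrt (by positivity)]
  have objective_eq :
      ∑ j, (∑ i, Δ i * A' i j) ^ 2 = (∑ i, |Δ i| * √(∑ k, (A i k) ^ 2)) ^ 2 := by
    simp only [hA'_eq, Matrix.sum_sq_sum_mul_vecMulVec, he_unit, mul_one, ← mul_assoc, s,
      mul_ite_nonneg_one_neg_one]
  have objective_le := Matrix.sum_sq_sum_mul_le_sq_sum_abs_mul_sqrt Δ A
  refine ⟨by linarith, fun i => by rw [row_sq], by rw [objective_eq], ?_⟩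
  intro ε1 ε2 h1 h2
  refine ⟨A', hA'_eq ▸ Matrix.rank_vecMulVec_le _ _, ?_, ?_, by linarith⟩
  · simpa only [row_sq] using h1
  · simpa only [row_sq] using h2

/-- with `Δ_i = p1_i − p2_i`, for any matrix `A` and unit vector `e`:
(i) `(1/2)‖Σ_i Δ_i A_i‖² ≤ (1/2)(Σ_i |Δ_i| ‖A_i‖)²`;
(ii) the matrix `A'` with rows `A'_i = sign(Δ_i)·‖A_i‖·e` satisfies `‖A'_i‖ = ‖A_i‖`
for every `i` and `(1/2)‖Σ_i Δ_i A'_i‖² = (1/2)(Σ_i |Δ_i| ‖A_i‖)²`;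
(iii) consequently, every `A` feasible for the two ellipsoidal constraints is
dominated in objective value by a feasible matrix of rank at most one. -/
theorem rankOne_domination {M : ℕ}
    (p1 p2 : Fin M → ℝ)
    (hp1 : ∀ i, 0 ≤ p1 i) (hp1s : ∑ i, p1 i = 1)
    (hp2 : ∀ i, 0 ≤ p2 i) (hp2s : ∑ i, p2 i = 1)
    (Δ : Fin M → ℝ) (hΔ : ∀ i, Δ i = p1 i - p2 i)
    (A : Matrix (Fin M) (Fin M) ℝ)
    (e : Fin M → ℝ) (he_unit : ∑ j, (e j) ^ 2 = 1)
    (A' : Matrix (Fin M) (Fin M) ℝ)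
    (hA' : ∀ i j, A' i j =
      (if 0 ≤ Δ i then (1 : ℝ) else -1) * Real.sqrt (∑ k, (A i k) ^ 2) * e j) :
    ((1 / 2) * ∑ j, (∑ i, Δ i * A i j) ^ 2 ≤
        (1 / 2) * (∑ i, |Δ i| * Real.sqrt (∑ k, (A i k) ^ 2)) ^ 2) ∧
    (∀ i, Real.sqrt (∑ j, (A' i j) ^ 2) = Real.sqrt (∑ j, (A i j) ^ 2)) ∧
    ((1 / 2) * ∑ j, (∑ i, Δ i * A' i j) ^ 2 =
        (1 / 2) * (∑ i, |Δ i| * Real.sqrt (∑ k, (A i k) ^ 2)) ^ 2) ∧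
    (∀ ε1 ε2 : ℝ,
      (1 / 2) * ∑ i, p1 i * ∑ j, (A i j) ^ 2 ≤ ε1 →
      (1 / 2) * ∑ i, p2 i * ∑ j, (A i j) ^ 2 ≤ ε2 →
      ∃ B : Matrix (Fin M) (Fin M) ℝ, B.rank ≤ 1 ∧
        (1 / 2) * ∑ i, p1 i * ∑ j, (B i j) ^ 2 ≤ ε1 ∧
        (1 / 2) * ∑ i, p2 i * ∑ j, (B i j) ^ 2 ≤ ε2 ∧
        (1 / 2) * ∑ j, (∑ i, Δ i * A i j) ^ 2 ≤
          (1 / 2) * ∑ j, (∑ i, Δ i * B i j) ^ 2) :=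
  rankOne_domination_general p1 p2 Δ A e he_unit A' hA'
end

section
/- Let p1, p2 ∈ ℝ^M be strictly positive probability vectors with p1 ≠ p2, let ε1, ε2 > 0, let v* = (p1 − p2)/‖p1 − p2‖, and let S1 = Σ_{i=1}^M (v*_i)²/p1_i. If (Σ_{i=1}^M (v*_i)²·p2_i/(p1_i)²)/S1 < ε2/ε1, then the vector α* ∈ ℝ^M with entries α*_i = √(2ε1/S1)·v*_i/p1_i, as well as −α*, is an optimal solution of the quadratic vector problem. -/
/-!
By the weighted Cauchy–Schwarz inequality,
`(Σ (p1_i − p2_i) β_i)² ≤ (Σ (p1_i − p2_i)²/p1_i) · Σ p1_i β_i²`, so the first constraint alone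
bounds `Q` by `ε1 · Σ (p1_i − p2_i)²/p1_i`. Equality holds for `β` proportional to
`(p1_i − p2_i)/p1_i` with the first constraint tight, which is `±α*`; the hypothesis on the ratio
is exactly what makes `α*` satisfy the second constraint as well.
-/

open Real

noncomputable section

def IsOptimal {M : ℕ} (p1 p2 : Fin M → ℝ) (ε1 ε2 : ℝ) (α : Fin M → ℝ) : Prop :=
  α ∈ QFeas p1 p2 ε1 ε2 ∧ ∀ β ∈ QFeas p1 p2 ε1 ε2, Qobj p1 p2 β ≤ Qobj p1 p2 α

section

variable {M : ℕ} {p1 p2 : Fin M → ℝ} {ε1 ε2 : ℝ}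

theorem Qobj_neg (α : Fin M → ℝ) : Qobj p1 p2 (-α) = Qobj p1 p2 α := by
  simp [Qobj, Finset.sum_neg_distrib]

theorem neg_mem_QFeas {α : Fin M → ℝ} (h : α ∈ QFeas p1 p2 ε1 ε2) :
    -α ∈ QFeas p1 p2 ε1 ε2 := by
  simpa [QFeas] using h

theorem IsOptimal.neg {α : Fin M → ℝ} (h : IsOptimal p1 p2 ε1 ε2 α) :
    IsOptimal p1 p2 ε1 ε2 (-α) :=
  ⟨neg_mem_QFeas h.1, fun β hβ => Qobj_neg (p1 := p1) (p2 := p2) α ▸ h.2 β hβ⟩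

theorem Qobj_le_of_sum_mul_sq_le (hp1 : ∀ i, 0 < p1 i) {β : Fin M → ℝ}
    (hβ : 1 / 2 * ∑ i, p1 i * β i ^ 2 ≤ ε1) :
    Qobj p1 p2 β ≤ ε1 * ∑ i, (p1 i - p2 i) ^ 2 / p1 i := by
  have hD : 0 ≤ ∑ i, (p1 i - p2 i) ^ 2 / p1 i :=
    Finset.sum_nonneg fun i _ => div_nonneg (sq_nonneg _) (hp1 i).le
  have hCS : (∑ i, (p1 i - p2 i) * β i) ^ 2
      ≤ (∑ i, (p1 i - p2 i) ^ 2 / p1 i) * ∑ i, p1 i * β i ^ 2 :=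
    Finset.sum_sq_le_sum_mul_sum_of_sq_le_mul _
      (fun i _ => div_nonneg (sq_nonneg _) (hp1 i).le)
      (fun i _ => mul_nonneg (hp1 i).le (sq_nonneg _))
      fun i _ => le_of_eq (by field_simp [(hp1 i).ne'])
  unfold Qobj
  nlinarith

theorem isOptimal_of_sub_eq_mul (hp1 : ∀ i, 0 < p1 i) (hε1 : 0 < ε1) {N : ℝ}
    {v : Fin M → ℝ} (hv : ∀ i, p1 i - p2 i = N * v i) (hS : 0 < ∑ i, v i ^ 2 / p1 i)
    (hactive : (∑ i, v i ^ 2 * p2 i / p1 i ^ 2) / (∑ i, v i ^ 2 / p1 i) < ε2 / ε1) :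
    IsOptimal p1 p2 ε1 ε2 fun i => √(2 * ε1 / ∑ i, v i ^ 2 / p1 i) * v i / p1 i := by
  set S := ∑ i, v i ^ 2 / p1 i
  set c := √(2 * ε1 / S)
  have hc : c ^ 2 = 2 * ε1 / S := sq_sqrt (by positivity)
  have hsum1 : ∑ i, p1 i * (c * v i / p1 i) ^ 2 = 2 * ε1 := by
    calc ∑ i, p1 i * (c * v i / p1 i) ^ 2 = c ^ 2 * S := by
          rw [Finset.mul_sum]
          exact Finset.sum_congr rfl fun i _ => by field_simp [(hp1 i).ne']
      _ = 2 * ε1 := by rw [hc]; field_simp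
  have hsum2 : ∑ i, p2 i * (c * v i / p1 i) ^ 2 = c ^ 2 * ∑ i, v i ^ 2 * p2 i / p1 i ^ 2 := by
    rw [Finset.mul_sum]
    exact Finset.sum_congr rfl fun i _ => by field_simp [(hp1 i).ne']
  have hobj : ∑ i, (p1 i - p2 i) * (c * v i / p1 i) = N * c * S := by
    rw [Finset.mul_sum]
    exact Finset.sum_congr rfl fun i _ => by rw [hv]; field_simp [(hp1 i).ne']
  have hD : ∑ i, (p1 i - p2 i) ^ 2 / p1 i = N ^ 2 * S := by
    rw [Finset.mul_sum]
    exact Finset.sum_congr rfl fun i _ => by rw [hv]; ring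
  have hfeas1 : 1 / 2 * ∑ i, p1 i * (c * v i / p1 i) ^ 2 ≤ ε1 := by
    rw [hsum1]; linarith
  have hfeas2 : 1 / 2 * ∑ i, p2 i * (c * v i / p1 i) ^ 2 ≤ ε2 := by
    calc 1 / 2 * ∑ i, p2 i * (c * v i / p1 i) ^ 2
        = ε1 * ((∑ i, v i ^ 2 * p2 i / p1 i ^ 2) / S) := by rw [hsum2, hc]; ring
      _ ≤ ε2 := ((lt_div_iff₀' hε1).mp hactive).le
  refine ⟨⟨hfeas1, hfeas2⟩, fun β hβ => ?_⟩
  calc Qobj p1 p2 β ≤ ε1 * ∑ i, (p1 i - p2 i) ^ 2 / p1 i := Qobj_le_of_sum_mul_sq_le hp1 hβ.1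
    _ = Qobj p1 p2 fun i => c * v i / p1 i := by
      rw [Qobj, hobj, hD, mul_pow, mul_pow, hc]
      field_simp

end

theorem optimal_alpha_first_constraint_active_general {M : ℕ}
    (p1 p2 : Fin M → ℝ)
    (hp1 : ∀ i, 0 < p1 i)
    (hne : p1 ≠ p2)
    (ε1 ε2 : ℝ) (hε1 : 0 < ε1)
    (vs : Fin M → ℝ)
    (hvs : ∀ i, vs i = (p1 i - p2 i) / Real.sqrt (∑ k, (p1 k - p2 k) ^ 2))
    (S1 : ℝ) (hS1 : S1 = ∑ i, (vs i) ^ 2 / p1 i)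
    (hactive : (∑ i, (vs i) ^ 2 * p2 i / (p1 i) ^ 2) / S1 < ε2 / ε1)
    (αs : Fin M → ℝ)
    (hαs : ∀ i, αs i = Real.sqrt (2 * ε1 / S1) * vs i / p1 i) :
    (αs ∈ QFeas p1 p2 ε1 ε2 ∧
      ∀ β ∈ QFeas p1 p2 ε1 ε2, Qobj p1 p2 β ≤ Qobj p1 p2 αs) ∧
    (-αs ∈ QFeas p1 p2 ε1 ε2 ∧
      ∀ β ∈ QFeas p1 p2 ε1 ε2, Qobj p1 p2 β ≤ Qobj p1 p2 (-αs)) := by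
  obtain ⟨j, hj⟩ := Function.ne_iff.mp hne
  have hdj : p1 j - p2 j ≠ 0 := sub_ne_zero.mpr hj
  have hN : √(∑ k, (p1 k - p2 k) ^ 2) ≠ 0 := (sqrt_pos.mpr <| Finset.sum_pos'
    (fun k _ => sq_nonneg (p1 k - p2 k)) ⟨j, Finset.mem_univ j, sq_pos_of_ne_zero hdj⟩).ne'
  have hv : ∀ i, p1 i - p2 i = √(∑ k, (p1 k - p2 k) ^ 2) * vs i := fun i => by
    rw [hvs i]; field_simp
  have hS1pos : 0 < S1 := hS1 ▸ Finset.sum_pos'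
    (fun i _ => div_nonneg (sq_nonneg _) (hp1 i).le)
    ⟨j, Finset.mem_univ j, div_pos (sq_pos_of_ne_zero (right_ne_zero_of_mul (hv j ▸ hdj))) (hp1 j)⟩
  subst hS1
  obtain rfl : αs = _ := funext hαs
  have h := isOptimal_of_sub_eq_mul hp1 hε1 hv hS1pos hactive
  exact ⟨h, h.neg⟩

/-- if only the first constraint is active, i.e.
`(Σ_i (v*_i)² p2_i/(p1_i)²)/S1 < ε2/ε1` with `S1 = Σ_i (v*_i)²/p1_i`, then
`α*_i = √(2ε1/S1)·v*_i/p1_i`, as well as `−α*`, is an optimal solution of the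
quadratic vector problem. -/
theorem optimal_alpha_first_constraint_active {M : ℕ}
    (p1 p2 : Fin M → ℝ)
    (hp1 : ∀ i, 0 < p1 i) (hp1s : ∑ i, p1 i = 1)
    (hp2 : ∀ i, 0 < p2 i) (hp2s : ∑ i, p2 i = 1)
    (hne : p1 ≠ p2)
    (ε1 ε2 : ℝ) (hε1 : 0 < ε1) (hε2 : 0 < ε2)
    (vs : Fin M → ℝ)
    (hvs : ∀ i, vs i = (p1 i - p2 i) / Real.sqrt (∑ k, (p1 k - p2 k) ^ 2))
    (S1 : ℝ) (hS1 : S1 = ∑ i, (vs i) ^ 2 / p1 i)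
    (hactive : (∑ i, (vs i) ^ 2 * p2 i / (p1 i) ^ 2) / S1 < ε2 / ε1)
    (αs : Fin M → ℝ)
    (hαs : ∀ i, αs i = Real.sqrt (2 * ε1 / S1) * vs i / p1 i) :
    (αs ∈ QFeas p1 p2 ε1 ε2 ∧
      ∀ β ∈ QFeas p1 p2 ε1 ε2, Qobj p1 p2 β ≤ Qobj p1 p2 αs) ∧
    (-αs ∈ QFeas p1 p2 ε1 ε2 ∧
      ∀ β ∈ QFeas p1 p2 ε1 ε2, Qobj p1 p2 β ≤ Qobj p1 p2 (-αs)) :=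
  optimal_alpha_first_constraint_active_general p1 p2 hp1 hne ε1 ε2 hε1 vs hvs S1 hS1 hactive αs hαs
end
end

section
/- Let M ≥ 2, let p1, p2 ∈ ℝ^M be probability vectors, let ε1, ε2 ≥ 0, and let w0 ∈ ℝ^M be a strictly positive probability vector. Suppose α* ∈ ℝ^M is an optimal solution of the quadratic vector problem and v ∈ ℝ^M is a unit vector with Σ_{j=1}^M v_j·√(w0_j) = 0. Then the matrix Θ* with entries Θ*_{ij} = α*_i · v_j · √(w0_j) is feasible for the Θ-problem (in particular each row of Θ* sums to 0) and is an optimal solution of the Θ-problem, i.e., G(Θ*) equals the supremum of G over the feasible set of the Θ-problem. -/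
open Real

noncomputable section

/-- Objective of the Θ-problem:
`G(Θ) = (1/2)·Σ_j (Σ_i (p1_i − p2_i) Θ_{ij})² / w0_j`. -/
def Gobj {M : ℕ} (p1 p2 w0 : Fin M → ℝ) (Θ : Matrix (Fin M) (Fin M) ℝ) : ℝ :=
  (1 / 2) * ∑ j, (∑ i, (p1 i - p2 i) * Θ i j) ^ 2 / w0 j

/-- Feasible set of the Θ-problem: rows of `Θ` sum to `0`,
`(1/2)·Σ_i p1_i Σ_j Θ_{ij}²/w0_j ≤ ε1`, and `(1/2)·Σ_i p2_i Σ_j Θ_{ij}²/w0_j ≤ ε2`. -/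
def ThetaFeas {M : ℕ} (p1 p2 : Fin M → ℝ) (ε1 ε2 : ℝ) (w0 : Fin M → ℝ) :
    Set (Matrix (Fin M) (Fin M) ℝ) :=
  {Θ | (∀ i, ∑ j, Θ i j = 0) ∧
       (1 / 2) * ∑ i, p1 i * ∑ j, (Θ i j) ^ 2 / w0 j ≤ ε1 ∧
       (1 / 2) * ∑ i, p2 i * ∑ j, (Θ i j) ^ 2 / w0 j ≤ ε2}

/-!
Rescaling the columns by `1/√w0_j` turns the Θ-problem into a problem over matrices `B` whose
row norms enter the constraints and whose objective is `½‖dᵀB‖²`, with `d = p1 − p2`.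
The vector `α = B u`, where `u` is the unit vector along `dᵀB`, has `α_i² ≤ ‖B_i‖²` by
Cauchy–Schwarz, hence is feasible for the vector problem, and `d·α = ‖dᵀB‖`; so the vector
problem dominates the Θ-problem. Conversely the rank-one matrix `Θ*_{ij} = α*_i v_j √(w0_j)` carries the
value `Q(α*)`, and it is feasible because `v` is a unit vector orthogonal to `√w0`.
-/

open Matrix

section RowCombination

variable {ι κ : Type*} [Fintype κ]

theorem sq_mulVec_apply_le_sum_sq (B : Matrix ι κ ℝ) {u : κ → ℝ} (hu : u ⬝ᵥ u ≤ 1) (i : ι) :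
    (B *ᵥ u) i ^ 2 ≤ ∑ j, B i j ^ 2 :=
  calc (B *ᵥ u) i ^ 2 ≤ (∑ j, B i j ^ 2) * ∑ j, u j ^ 2 :=
        Finset.sum_mul_sq_le_sq_mul_sq _ _ _
    _ ≤ (∑ j, B i j ^ 2) * 1 := by
        gcongr
        simpa only [dotProduct, sq] using hu
    _ = ∑ j, B i j ^ 2 := mul_one _

theorem exists_sq_le_sum_sq_and_sq_dotProduct_eq [Fintype ι] (B : Matrix ι κ ℝ) (d : ι → ℝ) :
    ∃ α : ι → ℝ, (∀ i, α i ^ 2 ≤ ∑ j, B i j ^ 2) ∧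
      (d ⬝ᵥ α) ^ 2 = (d ᵥ* B) ⬝ᵥ (d ᵥ* B) := by
  set t := d ᵥ* B
  have ht : 0 ≤ t ⬝ᵥ t := Finset.sum_nonneg fun j _ => mul_self_nonneg (t j)
  -- when `t = 0` the junk value `0⁻¹ = 0` makes `u = 0`, which still works
  set u := (√(t ⬝ᵥ t))⁻¹ • t
  have hu : u ⬝ᵥ u ≤ 1 := by
    rw [smul_dotProduct, dotProduct_smul, smul_eq_mul, smul_eq_mul, ← mul_assoc, ← mul_inv,
      Real.mul_self_sqrt ht]
    exact inv_mul_le_one_of_le₀ le_rfl ht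
  refine ⟨B *ᵥ u, sq_mulVec_apply_le_sum_sq B hu, ?_⟩
  rw [dotProduct_mulVec, dotProduct_smul, smul_eq_mul, ← div_eq_inv_mul, Real.div_sqrt,
    Real.sq_sqrt ht]

end RowCombination

section ThetaProblem

variable {M : ℕ} {p1 p2 w0 : Fin M → ℝ} {ε1 ε2 : ℝ}

theorem exists_mem_QFeas_Qobj_eq_Gobj (hp1 : ∀ i, 0 ≤ p1 i) (hp2 : ∀ i, 0 ≤ p2 i)
    (hw0 : ∀ j, 0 ≤ w0 j) {Θ : Matrix (Fin M) (Fin M) ℝ} (hΘ : Θ ∈ ThetaFeas p1 p2 ε1 ε2 w0) :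
    ∃ α ∈ QFeas p1 p2 ε1 ε2, Qobj p1 p2 α = Gobj p1 p2 w0 Θ := by
  set B : Matrix (Fin M) (Fin M) ℝ := fun i j => Θ i j / √(w0 j)
  obtain ⟨α, hα_row, hα_val⟩ := exists_sq_le_sum_sq_and_sq_dotProduct_eq B (p1 - p2)
  have hrow : ∀ i, ∑ j, B i j ^ 2 = ∑ j, Θ i j ^ 2 / w0 j := fun i => by
    simp only [B, div_pow, Real.sq_sqrt (hw0 _)]
  have hweighted : ∀ p : Fin M → ℝ, (∀ i, 0 ≤ p i) →
      ∑ i, p i * α i ^ 2 ≤ ∑ i, p i * ∑ j, Θ i j ^ 2 / w0 j := fun p hp => by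
    gcongr with i
    · exact hp i
    · exact hrow i ▸ hα_row i
  refine ⟨α, ⟨?_, ?_⟩, ?_⟩
  · linarith [hweighted p1 hp1, hΘ.2.1]
  · linarith [hweighted p2 hp2, hΘ.2.2]
  · change (1 / 2) * ((p1 - p2) ⬝ᵥ α) ^ 2 = _
    rw [hα_val, Gobj]
    congr 1
    refine Finset.sum_congr rfl fun j _ => ?_
    simp only [B, vecMul, dotProduct, Pi.sub_apply, mul_div_assoc', ← Finset.sum_div, ← sq,
      div_pow, Real.sq_sqrt (hw0 j)]

variable {v : Fin M → ℝ}

theorem sum_rankOne_sq_div (hw0 : ∀ j, 0 < w0 j) (hv : ∑ j, v j ^ 2 = 1) (c : ℝ) :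
    ∑ j, (c * v j * √(w0 j)) ^ 2 / w0 j = c ^ 2 := by
  simp only [mul_pow, Real.sq_sqrt (hw0 _).le, mul_div_cancel_right₀ _ (hw0 _).ne',
    ← Finset.mul_sum, hv, mul_one]

theorem Gobj_rankOne (hw0 : ∀ j, 0 < w0 j) (hv : ∑ j, v j ^ 2 = 1) (α : Fin M → ℝ) :
    Gobj p1 p2 w0 (fun i j => α i * v j * √(w0 j)) = Qobj p1 p2 α := by
  have hcol : ∀ j, ∑ i, (p1 i - p2 i) * (α i * v j * √(w0 j)) =
      (∑ i, (p1 i - p2 i) * α i) * v j * √(w0 j) := fun j => by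
    simp only [Finset.sum_mul, mul_assoc]
  simp only [Gobj, Qobj, hcol, sum_rankOne_sq_div hw0 hv]

theorem rankOne_mem_ThetaFeas (hw0 : ∀ j, 0 < w0 j) (hv : ∑ j, v j ^ 2 = 1)
    (hv_orth : ∑ j, v j * √(w0 j) = 0) {α : Fin M → ℝ} (hα : α ∈ QFeas p1 p2 ε1 ε2) :
    (fun i j => α i * v j * √(w0 j) : Matrix (Fin M) (Fin M) ℝ) ∈ ThetaFeas p1 p2 ε1 ε2 w0 := by
  refine ⟨fun i => ?_, ?_, ?_⟩
  · simp only [mul_assoc, ← Finset.mul_sum, hv_orth, mul_zero]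
  · simpa only [sum_rankOne_sq_div hw0 hv] using hα.1
  · simpa only [sum_rankOne_sq_div hw0 hv] using hα.2

end ThetaProblem

theorem optimal_theta_general {M : ℕ}
    (p1 p2 : Fin M → ℝ)
    (hp1 : ∀ i, 0 ≤ p1 i)
    (hp2 : ∀ i, 0 ≤ p2 i)
    (ε1 ε2 : ℝ)
    (w0 : Fin M → ℝ) (hw0 : ∀ j, 0 < w0 j)
    (αs : Fin M → ℝ) (hαs_feas : αs ∈ QFeas p1 p2 ε1 ε2)
    (hαs_opt : ∀ β ∈ QFeas p1 p2 ε1 ε2, Qobj p1 p2 β ≤ Qobj p1 p2 αs)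
    (v : Fin M → ℝ) (hv_unit : ∑ j, (v j) ^ 2 = 1)
    (hv_orth : ∑ j, v j * Real.sqrt (w0 j) = 0) :
    (fun i j => αs i * v j * Real.sqrt (w0 j) : Matrix (Fin M) (Fin M) ℝ) ∈
        ThetaFeas p1 p2 ε1 ε2 w0 ∧
      Gobj p1 p2 w0 (fun i j => αs i * v j * Real.sqrt (w0 j)) =
        sSup (Gobj p1 p2 w0 '' ThetaFeas p1 p2 ε1 ε2 w0) := by
  have hfeas := rankOne_mem_ThetaFeas hw0 hv_unit hv_orth hαs_feas
  refine ⟨hfeas, (IsGreatest.csSup_eq ⟨Set.mem_image_of_mem _ hfeas, ?_⟩).symm⟩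
  rintro _ ⟨Θ, hΘ, rfl⟩
  obtain ⟨α, hα, hQG⟩ := exists_mem_QFeas_Qobj_eq_Gobj hp1 hp2 (fun j => (hw0 j).le) hΘ
  rw [Gobj_rankOne hw0 hv_unit, ← hQG]
  exact hαs_opt α hα

/-- if `α*` is an optimal solution of the quadratic vector problem and
`v` is a unit vector orthogonal to `√w0`, then `Θ*_{ij} = α*_i v_j √(w0_j)` is
feasible for the Θ-problem (in particular each row sums to `0`) and optimal for it,
i.e. `G(Θ*)` equals the supremum of `G` over the feasible set of the Θ-problem. -/
theorem optimal_theta {M : ℕ} (hM : 2 ≤ M)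
    (p1 p2 : Fin M → ℝ)
    (hp1 : ∀ i, 0 ≤ p1 i) (hp1s : ∑ i, p1 i = 1)
    (hp2 : ∀ i, 0 ≤ p2 i) (hp2s : ∑ i, p2 i = 1)
    (ε1 ε2 : ℝ) (hε1 : 0 ≤ ε1) (hε2 : 0 ≤ ε2)
    (w0 : Fin M → ℝ) (hw0 : ∀ j, 0 < w0 j) (hw0s : ∑ j, w0 j = 1)
    (αs : Fin M → ℝ) (hαs_feas : αs ∈ QFeas p1 p2 ε1 ε2)
    (hαs_opt : ∀ β ∈ QFeas p1 p2 ε1 ε2, Qobj p1 p2 β ≤ Qobj p1 p2 αs)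
    (v : Fin M → ℝ) (hv_unit : ∑ j, (v j) ^ 2 = 1)
    (hv_orth : ∑ j, v j * Real.sqrt (w0 j) = 0) :
    (fun i j => αs i * v j * Real.sqrt (w0 j) : Matrix (Fin M) (Fin M) ℝ) ∈
        ThetaFeas p1 p2 ε1 ε2 w0 ∧
      Gobj p1 p2 w0 (fun i j => αs i * v j * Real.sqrt (w0 j)) =
        sSup (Gobj p1 p2 w0 '' ThetaFeas p1 p2 ε1 ε2 w0) :=
  optimal_theta_general p1 p2 hp1 hp2 ε1 ε2 w0 hw0 αs hαs_feas hαs_opt v hv_unit hv_orth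
end
end

section
/- Let p1, p2 ∈ ℝ^M be strictly positive probability vectors with p1 ≠ p2, let ε1, ε2 > 0, let v* = (p1 − p2)/‖p1 − p2‖, and let S1 = Σ_{i=1}^M (v*_i)²/p1_i. If (Σ_{i=1}^M (v*_i)²·p2_i/(p1_i)²)/S1 < ε2/ε1, then the supremum of Q over the feasible set of the quadratic vector problem equals ε1·Σ_{i=1}^M (p1_i − p2_i)²/p1_i. -/
open Real

noncomputable section

/-!
By Cauchy–Schwarz with weights `p1`, `(Σ dᵢ αᵢ)² ≤ (Σ dᵢ² / p1ᵢ) (Σ p1ᵢ αᵢ²)` for `d = p1 - p2`,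
so the first constraint alone bounds `Q` by `ε1 Σ dᵢ² / p1ᵢ`, and equality holds at the
multiple of `d / p1` on which the first constraint is tight. The hypothesis on `v*` says exactly
that this point also satisfies the second constraint; it does not change when `d` is rescaled
to `v*`.
-/

open Finset

theorem div_sum_sq_mul_normalize {ι : Type*} [Fintype ι] (d a b : ι → ℝ) :
    (∑ i, (d i / √(∑ k, d k ^ 2)) ^ 2 * a i) / ∑ i, (d i / √(∑ k, d k ^ 2)) ^ 2 * b i =
      (∑ i, d i ^ 2 * a i) / ∑ i, d i ^ 2 * b i := by
  have hN : 0 ≤ ∑ k, d k ^ 2 := sum_nonneg fun k _ => sq_nonneg (d k)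
  rcases hN.eq_or_lt with hN | hN
  · have hd : ∀ i, d i = 0 := fun i =>
      pow_eq_zero_iff two_ne_zero |>.mp <|
        (sum_eq_zero_iff_of_nonneg fun k _ => sq_nonneg (d k)).mp hN.symm i (mem_univ i)
    simp [hd]
  · simp_rw [div_pow, sq_sqrt hN.le, div_mul_eq_mul_div, ← sum_div]
    exact div_div_div_cancel_right₀ hN.ne' _ _

section QuadraticVectorProblem

variable {M : ℕ} {p1 p2 : Fin M → ℝ} {ε1 ε2 : ℝ}

variable (p2) in
theorem sum_sq_sub_div_nonneg (hp1 : ∀ i, 0 < p1 i) : 0 ≤ ∑ i, (p1 i - p2 i) ^ 2 / p1 i :=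
  sum_nonneg fun i _ => div_nonneg (sq_nonneg _) (hp1 i).le

theorem Qobj_le_of_mem_QFeas (hp1 : ∀ i, 0 < p1 i) {α : Fin M → ℝ}
    (hα : α ∈ QFeas p1 p2 ε1 ε2) : Qobj p1 p2 α ≤ ε1 * ∑ i, (p1 i - p2 i) ^ 2 / p1 i := by
  have hT := sum_sq_sub_div_nonneg p2 hp1
  have hcs : (∑ i, (p1 i - p2 i) * α i) ^ 2 ≤
      (∑ i, (p1 i - p2 i) ^ 2 / p1 i) * ∑ i, p1 i * α i ^ 2 :=
    sum_sq_le_sum_mul_sum_of_sq_le_mul _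
      (fun i _ => div_nonneg (sq_nonneg _) (hp1 i).le)
      (fun i _ => mul_nonneg (hp1 i).le (sq_nonneg _)) fun i _ =>
        le_of_eq (by field_simp [(hp1 i).ne'])
  unfold Qobj
  nlinarith [hα.1]

-- If `p1 = p2` the sum vanishes and `2 * ε1 / 0 = 0` makes this the zero vector, still optimal.
variable (p1 p2 ε1) in
def firstConstraintMaximizer : Fin M → ℝ :=
  fun i => √(2 * ε1 / ∑ k, (p1 k - p2 k) ^ 2 / p1 k) * ((p1 i - p2 i) / p1 i)

variable (p1 p2) in
theorem sum_mul_firstConstraintMaximizer :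
    ∑ i, (p1 i - p2 i) * firstConstraintMaximizer p1 p2 ε1 i =
      √(2 * ε1 / ∑ k, (p1 k - p2 k) ^ 2 / p1 k) * ∑ i, (p1 i - p2 i) ^ 2 / p1 i := by
  simp only [firstConstraintMaximizer, mul_sum]
  exact sum_congr rfl fun i _ => by ring

theorem sum_mul_firstConstraintMaximizer_sq (hp1 : ∀ i, 0 < p1 i) (hε1 : 0 ≤ ε1)
    (w : Fin M → ℝ) :
    ∑ i, w i * firstConstraintMaximizer p1 p2 ε1 i ^ 2 =
      2 * ε1 / (∑ k, (p1 k - p2 k) ^ 2 / p1 k) * ∑ i, (p1 i - p2 i) ^ 2 * w i / p1 i ^ 2 := by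
  have hT := sum_sq_sub_div_nonneg p2 hp1
  have hc : √(2 * ε1 / ∑ k, (p1 k - p2 k) ^ 2 / p1 k) ^ 2 =
      2 * ε1 / ∑ k, (p1 k - p2 k) ^ 2 / p1 k :=
    sq_sqrt (by positivity)
  simp only [firstConstraintMaximizer, mul_pow, hc, mul_sum]
  exact sum_congr rfl fun i _ => by ring

theorem Qobj_firstConstraintMaximizer (hp1 : ∀ i, 0 < p1 i) (hε1 : 0 ≤ ε1) :
    Qobj p1 p2 (firstConstraintMaximizer p1 p2 ε1) = ε1 * ∑ i, (p1 i - p2 i) ^ 2 / p1 i := by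
  have hT := sum_sq_sub_div_nonneg p2 hp1
  rw [Qobj, sum_mul_firstConstraintMaximizer, mul_pow, sq_sqrt (by positivity)]
  rcases hT.eq_or_lt with hT | hT
  · simp [← hT]
  · field_simp

theorem firstConstraintMaximizer_mem_QFeas (hp1 : ∀ i, 0 < p1 i) (hε1 : 0 < ε1)
    (hactive : (∑ i, (p1 i - p2 i) ^ 2 * p2 i / p1 i ^ 2) / (∑ i, (p1 i - p2 i) ^ 2 / p1 i) ≤
      ε2 / ε1) :
    firstConstraintMaximizer p1 p2 ε1 ∈ QFeas p1 p2 ε1 ε2 := by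
  have h1 : ∑ i, (p1 i - p2 i) ^ 2 * p1 i / p1 i ^ 2 = ∑ i, (p1 i - p2 i) ^ 2 / p1 i :=
    sum_congr rfl fun i _ => by field_simp [(hp1 i).ne']
  set T := ∑ i, (p1 i - p2 i) ^ 2 / p1 i
  rw [QFeas, Set.mem_ofPred_eq, sum_mul_firstConstraintMaximizer_sq hp1 hε1.le,
    sum_mul_firstConstraintMaximizer_sq hp1 hε1.le, h1]
  constructor
  · calc 1 / 2 * (2 * ε1 / T * T) = ε1 * (T / T) := by ring
      _ ≤ ε1 := mul_le_of_le_one_right hε1.le (div_self_le_one T)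
  · calc 1 / 2 * (2 * ε1 / T * _) = ε1 * ((∑ i, (p1 i - p2 i) ^ 2 * p2 i / p1 i ^ 2) / T) := by
          ring
      _ ≤ ε1 * (ε2 / ε1) := mul_le_mul_of_nonneg_left hactive hε1.le
      _ = ε2 := mul_div_cancel₀ ε2 hε1.ne'

theorem isGreatest_Qobj_image_QFeas (hp1 : ∀ i, 0 < p1 i) (hε1 : 0 < ε1)
    (hactive : (∑ i, (p1 i - p2 i) ^ 2 * p2 i / p1 i ^ 2) / (∑ i, (p1 i - p2 i) ^ 2 / p1 i) ≤
      ε2 / ε1) :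
    IsGreatest (Qobj p1 p2 '' QFeas p1 p2 ε1 ε2) (ε1 * ∑ i, (p1 i - p2 i) ^ 2 / p1 i) :=
  ⟨⟨_, firstConstraintMaximizer_mem_QFeas hp1 hε1 hactive,
      Qobj_firstConstraintMaximizer hp1 hε1.le⟩,
    by rintro _ ⟨α, hα, rfl⟩; exact Qobj_le_of_mem_QFeas hp1 hα⟩

end QuadraticVectorProblem

theorem sup_value_first_constraint_active_general {M : ℕ}
    (p1 p2 : Fin M → ℝ)
    (hp1 : ∀ i, 0 < p1 i)
    (ε1 ε2 : ℝ) (hε1 : 0 < ε1)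
    (vs : Fin M → ℝ)
    (hvs : ∀ i, vs i = (p1 i - p2 i) / Real.sqrt (∑ k, (p1 k - p2 k) ^ 2))
    (S1 : ℝ) (hS1 : S1 = ∑ i, (vs i) ^ 2 / p1 i)
    (hactive : (∑ i, (vs i) ^ 2 * p2 i / (p1 i) ^ 2) / S1 < ε2 / ε1) :
    sSup (Qobj p1 p2 '' QFeas p1 p2 ε1 ε2) =
      ε1 * ∑ i, (p1 i - p2 i) ^ 2 / p1 i := by
  obtain rfl : vs = fun i => (p1 i - p2 i) / √(∑ k, (p1 k - p2 k) ^ 2) := funext hvs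
  subst hS1
  simp only [mul_div_assoc, div_eq_mul_inv (_ ^ 2) (p1 _), div_sum_sq_mul_normalize] at hactive
  simp only [← mul_div_assoc, ← div_eq_mul_inv] at hactive
  exact (isGreatest_Qobj_image_QFeas hp1 hε1 hactive.le).csSup_eq

/-- if `(Σ_i (v*_i)² p2_i/(p1_i)²)/S1 < ε2/ε1` with
`S1 = Σ_i (v*_i)²/p1_i`, then the supremum of `Q` over the feasible set of the
quadratic vector problem equals `ε1·Σ_i (p1_i − p2_i)²/p1_i`. -/
theorem sup_value_first_constraint_active {M : ℕ}
    (p1 p2 : Fin M → ℝ)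
    (hp1 : ∀ i, 0 < p1 i) (hp1s : ∑ i, p1 i = 1)
    (hp2 : ∀ i, 0 < p2 i) (hp2s : ∑ i, p2 i = 1)
    (hne : p1 ≠ p2)
    (ε1 ε2 : ℝ) (hε1 : 0 < ε1) (hε2 : 0 < ε2)
    (vs : Fin M → ℝ)
    (hvs : ∀ i, vs i = (p1 i - p2 i) / Real.sqrt (∑ k, (p1 k - p2 k) ^ 2))
    (S1 : ℝ) (hS1 : S1 = ∑ i, (vs i) ^ 2 / p1 i)
    (hactive : (∑ i, (vs i) ^ 2 * p2 i / (p1 i) ^ 2) / S1 < ε2 / ε1) :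
    sSup (Qobj p1 p2 '' QFeas p1 p2 ε1 ε2) =
      ε1 * ∑ i, (p1 i - p2 i) ^ 2 / p1 i :=
  sup_value_first_constraint_active_general p1 p2 hp1 ε1 ε2 hε1 vs hvs S1 hS1 hactive
end
end
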